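/- Let W be an m × n real matrix and let σ₁(W), …, σ_{min(m,n)}(W) denote its singular values (the nonnegative square roots of the eigenvalues of WᵀW). Then the trace norm ‖W‖_T := Σ_{i=1}^{min(m,n)} σ_i(W) satisfies ‖W‖_T = min over all factorizations W = U·V with U of size m × min(m,n) and V of size min(m,n) × n of (1/2)(‖U‖_F² + ‖V‖_F²), where ‖·‖_F denotes the Frobenius norm. -/

import Mathlib

open Matrix BigOperators

/-- The Frobenius norm of a real matrix. -/
noncomputable def frobeniusNorm {m n : ℕ} (A : Matrix (Fin m) (Fin n) ℝ) : ℝ :=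
  Real.sqrt (∑ i, ∑ j, (A i j) ^ 2)

/-- The full list of `n` singular values of an `m × n` real matrix `W`, namely the
nonnegative square roots of the eigenvalues of `Wᵀ * W`. (At most `min m n` of these
are nonzero.) -/
noncomputable def singularValuesFull {m n : ℕ} (W : Matrix (Fin m) (Fin n) ℝ) :
    Fin n → ℝ :=
  fun i => Real.sqrt ((Matrix.isHermitian_conjTranspose_mul_self W).eigenvalues i)

/-- The trace norm (nuclear norm) of a real matrix: the sum of its singular values. -/
noncomputable def traceNorm {m n : ℕ} (W : Matrix (Fin m) (Fin n) ℝ) : ℝ :=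
  ∑ i, singularValuesFull W i

/-- `σ : Fin (min m n) → ℝ` is "the vector of singular values" of `W` when its entries
are nonnegative and, after padding with `n - min m n` zeros, it agrees (as a multiset)
with the nonnegative square roots of the eigenvalues of `Wᵀ * W`. -/
def IsSingularValueVector {m n : ℕ} (W : Matrix (Fin m) (Fin n) ℝ)
    (σ : Fin (min m n) → ℝ) : Prop :=
  (∀ i, 0 ≤ σ i) ∧
    Multiset.map σ Finset.univ.val + Multiset.replicate (n - min m n) 0
      = Multiset.map (singularValuesFull W) Finset.univ.val

/-! Diagonalise `WᵀW` by an orthonormal basis `(qᵢ)` with eigenvalues `σᵢ²`; for `σᵢ ≠ 0` the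
vectors `uᵢ = σᵢ⁻¹ W qᵢ` are orthonormal and `W = ∑ σᵢ uᵢ qᵢᵀ`. Taking the `√σᵢ uᵢ` as columns
of `U` and the `√σᵢ qᵢᵀ` as rows of `V` (padded with zeros: there are `rank W ≤ min m n` of them)
gives `‖U‖_F² = ‖V‖_F² = ∑ σᵢ`. Conversely, if `W = U V` then
`σᵢ = uᵢᵀ U V qᵢ ≤ (‖Uᵀuᵢ‖² + ‖V qᵢ‖²) / 2`, and Bessel's inequality for the orthonormal families
`(uᵢ)` and `(qᵢ)` bounds the two sums by `‖U‖_F²` and `‖V‖_F²`. -/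

open Function in
theorem sum_extend_mul_extend {ι κ R : Type*} [Fintype ι] [Fintype κ]
    [NonUnitalNonAssocSemiring R] (e : ι ↪ κ) (f g : ι → R) :
    ∑ k, extend e f 0 k * extend e g 0 k = ∑ i, f i * g i := by
  refine (Fintype.sum_of_injective e e.injective _ _ (fun k hk => ?_) fun i => ?_).symm
  · simp [extend_apply' _ _ _ hk]
  · simp [e.injective.extend_apply]

open Function in
theorem Matrix.exists_mul_eq_sum_sq_eq_of_embedding {l n ι κ R : Type*} [Fintype l] [Fintype n]
    [Fintype ι] [Fintype κ] [CommSemiring R] (e : ι ↪ κ) (A : Matrix l ι R) (B : Matrix ι n R) :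
    ∃ (A' : Matrix l κ R) (B' : Matrix κ n R), A' * B' = A * B ∧
      ∑ a, ∑ k, A' a k ^ 2 = ∑ a, ∑ i, A a i ^ 2 ∧ ∑ k, ∑ b, B' k b ^ 2 = ∑ i, ∑ b, B i b ^ 2 := by
  refine ⟨of fun a => extend e (A a) 0, of fun k b => extend e (fun i => B i b) 0 k,
    by ext a b; exact sum_extend_mul_extend e (A a) fun i => B i b, ?_, ?_⟩
  · simp only [sq, of_apply, sum_extend_mul_extend]
  · rw [Finset.sum_comm, Finset.sum_comm (γ := ι)]
    simp only [sq, of_apply, sum_extend_mul_extend]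

theorem frobeniusNorm_sq {m n : ℕ} (A : Matrix (Fin m) (Fin n) ℝ) :
    frobeniusNorm A ^ 2 = ∑ i, ∑ j, A i j ^ 2 :=
  Real.sq_sqrt (by positivity)

theorem frobeniusNorm_transpose {m n : ℕ} (A : Matrix (Fin m) (Fin n) ℝ) :
    frobeniusNorm Aᵀ = frobeniusNorm A := by
  rw [frobeniusNorm, frobeniusNorm, Finset.sum_comm]
  rfl

theorem sum_sq_vecMul_le_frobeniusNorm_sq {m k : ℕ} {ι : Type*} (A : Matrix (Fin m) (Fin k) ℝ)
    {u : ι → EuclideanSpace ℝ (Fin m)} (hu : Orthonormal ℝ u) (s : Finset ι) :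
    ∑ i ∈ s, ∑ j, (u i ᵥ* A) j ^ 2 ≤ frobeniusNorm A ^ 2 := by
  rw [frobeniusNorm_sq, Finset.sum_comm, Finset.sum_comm (γ := Fin m)]
  refine Finset.sum_le_sum fun j _ => ?_
  have bessel := hu.sum_inner_products_le (WithLp.toLp 2 (Aᵀ j)) (s := s)
  simp only [Real.norm_eq_abs, sq_abs, EuclideanSpace.real_norm_sq_eq,
    EuclideanSpace.inner_eq_star_dotProduct, star_trivial, dotProduct_comm] at bessel
  exact bessel

theorem dotProduct_le_sum_sq_add_sum_sq_div_two {ι : Type*} [Fintype ι] (x y : ι → ℝ) :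
    x ⬝ᵥ y ≤ (∑ j, x j ^ 2 + ∑ j, y j ^ 2) / 2 := by
  rw [dotProduct, ← Finset.sum_add_distrib, Finset.sum_div]
  gcongr with j
  linarith [two_mul_le_add_sq (x j) (y j)]

theorem sum_dotProduct_mul_mulVec_le {m k n : ℕ} {ι : Type*} (U : Matrix (Fin m) (Fin k) ℝ)
    (V : Matrix (Fin k) (Fin n) ℝ) {u : ι → EuclideanSpace ℝ (Fin m)}
    {v : ι → EuclideanSpace ℝ (Fin n)} (hu : Orthonormal ℝ u) (hv : Orthonormal ℝ v)
    (s : Finset ι) :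
    ∑ i ∈ s, u i ⬝ᵥ (U * V) *ᵥ v i ≤ (1 / 2) * (frobeniusNorm U ^ 2 + frobeniusNorm V ^ 2) := by
  have hU := sum_sq_vecMul_le_frobeniusNorm_sq U hu s
  have hV := sum_sq_vecMul_le_frobeniusNorm_sq Vᵀ hv s
  rw [frobeniusNorm_transpose] at hV
  calc ∑ i ∈ s, u i ⬝ᵥ (U * V) *ᵥ v i
      = ∑ i ∈ s, (u i ᵥ* U) ⬝ᵥ (v i ᵥ* Vᵀ) := by
        simp only [← mulVec_mulVec, dotProduct_mulVec, vecMul_transpose]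
    _ ≤ ∑ i ∈ s, (∑ j, (u i ᵥ* U) j ^ 2 + ∑ j, (v i ᵥ* Vᵀ) j ^ 2) / 2 := by
        gcongr with i; exact dotProduct_le_sum_sq_add_sum_sq_div_two _ _
    _ ≤ (1 / 2) * (frobeniusNorm U ^ 2 + frobeniusNorm V ^ 2) := by
        rw [← Finset.sum_div, Finset.sum_add_distrib]
        linarith

theorem sum_subtype_ne_zero_mul {ι : Type*} [Fintype ι] (σ f : ι → ℝ) :
    ∑ i : {i // σ i ≠ 0}, σ i * f i = ∑ i, σ i * f i := by
  classical
  rw [← Finset.sum_subtype {i | σ i ≠ 0} (by simp) fun i => σ i * f i]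
  exact Finset.sum_filter_of_ne fun i _ h => left_ne_zero_of_mul h

theorem Orthonormal.sum_sq_apply {ι κ : Type*} [Fintype κ] {v : ι → EuclideanSpace ℝ κ}
    (hv : Orthonormal ℝ v) (i : ι) : ∑ a, v i a ^ 2 = 1 := by
  rw [← EuclideanSpace.real_norm_sq_eq, hv.1 i, one_pow]

section SingularVectors

variable {m n : ℕ} (W : Matrix (Fin m) (Fin n) ℝ)

noncomputable def rightSingularBasis : OrthonormalBasis (Fin n) ℝ (EuclideanSpace ℝ (Fin n)) :=
  (isHermitian_conjTranspose_mul_self W).eigenvectorBasis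

noncomputable def leftSingularVector (i : Fin n) : EuclideanSpace ℝ (Fin m) :=
  (singularValuesFull W i)⁻¹ • WithLp.toLp 2 (W *ᵥ rightSingularBasis W i)

theorem dotProduct_rightSingularBasis (i j : Fin n) :
    rightSingularBasis W i ⬝ᵥ rightSingularBasis W j = if i = j then 1 else 0 := by
  rw [← orthonormal_iff_ite.mp (rightSingularBasis W).orthonormal i j,
    EuclideanSpace.inner_eq_star_dotProduct, star_trivial, dotProduct_comm]

theorem mulVec_rightSingularBasis_dotProduct (i j : Fin n) :
    (W *ᵥ rightSingularBasis W i) ⬝ᵥ (W *ᵥ rightSingularBasis W j) =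
      if i = j then singularValuesFull W i ^ 2 else 0 := by
  have hWW := (isHermitian_conjTranspose_mul_self W).mulVec_eigenvectorBasis j
  rw [dotProduct_mulVec, vecMul_mulVec, ← dotProduct_mulVec,
    ← conjTranspose_eq_transpose_of_trivial, rightSingularBasis, hWW, dotProduct_smul,
    ← rightSingularBasis, dotProduct_rightSingularBasis,
    singularValuesFull, Real.sq_sqrt (eigenvalues_conjTranspose_mul_self_nonneg W i)]
  split_ifs with h <;> simp [h]

theorem singularValuesFull_smul_leftSingularVector (i : Fin n) :
    singularValuesFull W i • (leftSingularVector W i).ofLp = W *ᵥ rightSingularBasis W i := by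
  rcases eq_or_ne (singularValuesFull W i) 0 with h | h
  · have : W *ᵥ rightSingularBasis W i = 0 := by
      simpa [h] using mulVec_rightSingularBasis_dotProduct W i i
    simp [h, this]
  · rw [leftSingularVector, WithLp.ofLp_smul, smul_inv_smul₀ h]

theorem orthonormal_leftSingularVector :
    Orthonormal ℝ fun i : {i // singularValuesFull W i ≠ 0} => leftSingularVector W i := by
  rw [orthonormal_iff_ite]
  rintro ⟨i, hi⟩ ⟨j, hj⟩
  rw [leftSingularVector, leftSingularVector, real_inner_smul_left, real_inner_smul_right,
    EuclideanSpace.inner_toLp_toLp, star_trivial, mulVec_rightSingularBasis_dotProduct]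
  by_cases h : i = j
  · subst h
    simp only [if_true]
    field_simp
  · simp [h, Ne.symm h]

theorem sum_singularValuesFull_mul_leftSingularVector_mul (a : Fin m) (b : Fin n) :
    ∑ i, singularValuesFull W i * (leftSingularVector W i a * rightSingularBasis W i b) =
      W a b := by
  set Q : Matrix (Fin n) (Fin n) ℝ := (isHermitian_conjTranspose_mul_self W).eigenvectorUnitary.1
  have hQ : Q * star Q = 1 := mem_unitaryGroup_iff.mp (Subtype.property _)
  have hσu : ∀ i,
      singularValuesFull W i * leftSingularVector W i a = (W *ᵥ rightSingularBasis W i) a :=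
    fun i => congr($(singularValuesFull_smul_leftSingularVector W i) a)
  calc ∑ i, singularValuesFull W i * (leftSingularVector W i a * rightSingularBasis W i b)
      = (W * Q * star Q) a b := by
        simp [← mul_assoc, hσu, Q, mul_apply, mulVec, dotProduct, rightSingularBasis]
    _ = W a b := by rw [Matrix.mul_assoc, hQ, Matrix.mul_one]

theorem card_singularValuesFull_ne_zero :
    Fintype.card {i // singularValuesFull W i ≠ 0} = W.rank := by
  rw [← rank_conjTranspose_mul_self,
    (isHermitian_conjTranspose_mul_self W).rank_eq_card_non_zero_eigs]
  refine Fintype.card_congr (Equiv.subtypeEquivRight fun i => ?_)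
  rw [singularValuesFull, ne_eq, Real.sqrt_eq_zero (eigenvalues_conjTranspose_mul_self_nonneg W i)]

theorem leftSingularVector_dotProduct_mulVec {i : Fin n} (hi : singularValuesFull W i ≠ 0) :
    leftSingularVector W i ⬝ᵥ W *ᵥ rightSingularBasis W i = singularValuesFull W i := by
  rw [← singularValuesFull_smul_leftSingularVector, dotProduct_smul, dotProduct]
  simp [← sq, (orthonormal_leftSingularVector W).sum_sq_apply ⟨i, hi⟩]

theorem traceNorm_eq_sum_subtype_ne_zero :
    traceNorm W = ∑ i : {i // singularValuesFull W i ≠ 0}, singularValuesFull W i := by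
  rw [traceNorm]
  simpa using (sum_subtype_ne_zero_mul (singularValuesFull W) 1).symm

theorem traceNorm_le_of_eq_mul {k : ℕ} (U : Matrix (Fin m) (Fin k) ℝ)
    (V : Matrix (Fin k) (Fin n) ℝ) (hW : W = U * V) :
    traceNorm W ≤ (1 / 2) * (frobeniusNorm U ^ 2 + frobeniusNorm V ^ 2) := by
  calc traceNorm W
      = ∑ i : {i // singularValuesFull W i ≠ 0},
          leftSingularVector W i ⬝ᵥ (U * V) *ᵥ rightSingularBasis W i := by
        rw [traceNorm_eq_sum_subtype_ne_zero, ← hW]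
        exact Finset.sum_congr rfl fun i _ => (leftSingularVector_dotProduct_mulVec W i.2).symm
    _ ≤ _ := sum_dotProduct_mul_mulVec_le U V (orthonormal_leftSingularVector W)
        ((rightSingularBasis W).orthonormal.comp _ Subtype.val_injective) _

theorem exists_mul_eq_sum_sq_eq_traceNorm :
    ∃ (U : Matrix (Fin m) {i // singularValuesFull W i ≠ 0} ℝ)
      (V : Matrix {i // singularValuesFull W i ≠ 0} (Fin n) ℝ),
      U * V = W ∧ ∑ a, ∑ i, U a i ^ 2 = traceNorm W ∧ ∑ i, ∑ b, V i b ^ 2 = traceNorm W := by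
  have hσ : ∀ i, √(singularValuesFull W i) ^ 2 = singularValuesFull W i :=
    fun i => Real.sq_sqrt (Real.sqrt_nonneg _)
  refine ⟨of fun a i => √(singularValuesFull W i) * leftSingularVector W i a,
    of fun i b => √(singularValuesFull W i) * rightSingularBasis W i b, ?_, ?_, ?_⟩
  · ext a b
    rw [Matrix.mul_apply, ← sum_singularValuesFull_mul_leftSingularVector_mul W a b,
      ← sum_subtype_ne_zero_mul (singularValuesFull W)]
    refine Finset.sum_congr rfl fun i _ => ?_
    rw [of_apply, of_apply]
    linear_combination (leftSingularVector W i a * rightSingularBasis W i b) * hσ i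
  · rw [Finset.sum_comm, traceNorm_eq_sum_subtype_ne_zero]
    refine Finset.sum_congr rfl fun i _ => ?_
    simp only [of_apply, mul_pow, hσ, ← Finset.mul_sum,
      (orthonormal_leftSingularVector W).sum_sq_apply i, mul_one]
  · rw [traceNorm_eq_sum_subtype_ne_zero]
    refine Finset.sum_congr rfl fun i _ => ?_
    simp only [of_apply, mul_pow, hσ, ← Finset.mul_sum,
      (rightSingularBasis W).orthonormal.sum_sq_apply i, mul_one]

theorem exists_eq_mul_frobeniusNorm_sq_eq_traceNorm {k : ℕ} (hk : W.rank ≤ k) :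
    ∃ (U : Matrix (Fin m) (Fin k) ℝ) (V : Matrix (Fin k) (Fin n) ℝ), W = U * V ∧
      frobeniusNorm U ^ 2 = traceNorm W ∧ frobeniusNorm V ^ 2 = traceNorm W := by
  obtain ⟨U₀, V₀, hW, hU₀, hV₀⟩ := exists_mul_eq_sum_sq_eq_traceNorm W
  obtain ⟨e⟩ := Function.Embedding.nonempty_of_card_le
    ((card_singularValuesFull_ne_zero W).trans_le (hk.trans (Fintype.card_fin k).ge))
  obtain ⟨U, V, hUV, hU, hV⟩ := Matrix.exists_mul_eq_sum_sq_eq_of_embedding e U₀ V₀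
  exact ⟨U, V, by rw [hUV, hW], by rw [frobeniusNorm_sq, hU, hU₀],
    by rw [frobeniusNorm_sq, hV, hV₀]⟩

end SingularVectors

theorem trace_norm_eq_min_factorization {m n : ℕ} (W : Matrix (Fin m) (Fin n) ℝ) :
    IsLeast {x : ℝ | ∃ (U : Matrix (Fin m) (Fin (min m n)) ℝ)
        (V : Matrix (Fin (min m n)) (Fin n) ℝ), W = U * V ∧
        x = (1 / 2) * (frobeniusNorm U ^ 2 + frobeniusNorm V ^ 2)}
      (traceNorm W) := by
  refine ⟨?_, fun x ⟨U, V, hW, hx⟩ => hx ▸ traceNorm_le_of_eq_mul W U V hW⟩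
  obtain ⟨U, V, hW, hU, hV⟩ :=
    exists_eq_mul_frobeniusNorm_sq_eq_traceNorm W (le_min W.rank_le_height W.rank_le_width)
  exact ⟨U, V, hW, by rw [hU, hV]; ring⟩
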